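/- arXiv:1205.6422 — 3 statements merged into one kernel-verified Lean document; each statement's English description precedes it below -/
import Mathlib

section
/- Let X be a locally pseudocompact Tychonoff space, let K be a compactification of X, let φ : βX → K be the continuous extension of the identity map of X, and let E be a compact subset of K \ X containing φ[ζX \ X]. Then the subspace Y = X ∪ E of K is a pseudocompactification of X with compact remainder. -/
open Set Topology

/-- A zero-set: the preimage of `{0}` under a continuous real-valued function. -/
def IsZeroSet {Y : Type*} [TopologicalSpace Y] (Z : Set Y) : Prop :=
  ∃ f : C(Y, ℝ), Z = f ⁻¹' {0}

/-- A cozero-set: the complement of a zero-set. -/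
def IsCozeroSet {Y : Type*} [TopologicalSpace Y] (C : Set Y) : Prop :=
  IsZeroSet Cᶜ

/-- A space is pseudocompact if every continuous real-valued function on it is bounded. -/
def IsPseudocompact (Y : Type*) [TopologicalSpace Y] : Prop :=
  ∀ f : C(Y, ℝ), ∃ M : ℝ, ∀ y, |f y| ≤ M

/-- A subset is pseudocompact if it is pseudocompact as a subspace. -/
def IsPseudocompactSet {Y : Type*} [TopologicalSpace Y] (A : Set Y) : Prop :=
  ∀ f : C(A, ℝ), ∃ M : ℝ, ∀ a, |f a| ≤ M

/-- The Hewitt realcompactification `υX`, realized as the subspace of `βX` consisting of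
those `p ∈ βX` such that every zero-set of `βX` containing `p` meets `X`. -/
def upsilonSet (X : Type*) [TopologicalSpace X] : Set (StoneCech X) :=
  {p | ∀ Z : Set (StoneCech X), IsZeroSet Z → p ∈ Z →
    (Z ∩ Set.range (stoneCechUnit : X → StoneCech X)).Nonempty}

/-- `ζX = X ∪ cl_{βX}(βX \ υX)`, as a subset of `βX`. -/
def zetaSet (X : Type*) [TopologicalSpace X] : Set (StoneCech X) :=
  Set.range (stoneCechUnit : X → StoneCech X) ∪ closure (upsilonSet X)ᶜ

/-! An unbounded continuous `g : X → ℝ` has, by compactness of `βX`, a point `p` in the closure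
of every set `{n ≤ |g|}`. The extension of `1 / (|g| + 1)` to `βX` vanishes at `p` but nowhere
on `X`, so `p ∉ υX`. Consequently every subspace of `βX` containing `X ∪ (βX \ υX)` is
pseudocompact; `Y` is pseudocompact because a continuous function on `Y` pulls back along `φ` to
such a subspace, hence is bounded on `X`, which is dense in `Y`. -/

lemma DenseRange.codRestrict {α β : Type*} [TopologicalSpace β] {f : α → β} (hf : DenseRange f)
    {s : Set β} (h : ∀ a, f a ∈ s) : DenseRange (codRestrict f s h) := by
  rw [DenseRange, Subtype.dense_iff, ← range_comp]
  exact fun b _ => hf b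

lemma abs_le_of_denseRange {α Y : Type*} [TopologicalSpace Y] {e : α → Y}
    (he : DenseRange e) (f : C(Y, ℝ)) {M : ℝ} (hM : ∀ a, |f (e a)| ≤ M) : ∀ y, |f y| ≤ M :=
  fun y => he.induction_on y (isClosed_le (continuous_abs.comp f.continuous) continuous_const) hM

section StoneCech

variable {X : Type*} [TopologicalSpace X]

lemma range_stoneCechUnit_subset_upsilonSet :
    range (stoneCechUnit : X → StoneCech X) ⊆ upsilonSet X := by
  rintro _ ⟨x, rfl⟩ Z - hxZ
  exact ⟨_, hxZ, x, rfl⟩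

lemma compl_upsilonSet_subset_zetaSet_diff :
    (upsilonSet X)ᶜ ⊆ zetaSet X \ range (stoneCechUnit : X → StoneCech X) :=
  fun _ hp => ⟨Or.inr (subset_closure hp), fun h => hp (range_stoneCechUnit_subset_upsilonSet h)⟩

lemma exists_notMem_upsilonSet_of_unbounded {g : X → ℝ} (hg : Continuous g)
    (hub : ∀ n : ℕ, ∃ x, (n : ℝ) ≤ |g x|) :
    ∃ p ∉ upsilonSet X, ∀ n : ℕ, p ∈ closure (stoneCechUnit '' {x | (n : ℝ) ≤ |g x|}) := by
  set S : ℕ → Set X := fun n => {x | (n : ℝ) ≤ |g x|}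
  obtain ⟨p, hp⟩ : (⋂ n, closure (stoneCechUnit '' S n)).Nonempty :=
    IsCompact.nonempty_iInter_of_sequence_nonempty_isCompact_isClosed _
      (fun n => closure_mono (image_mono fun _ (hx : ((n + 1 : ℕ) : ℝ) ≤ _) =>
        show (n : ℝ) ≤ _ from (Nat.cast_le.2 n.le_succ).trans hx))
      (fun n => (Nonempty.image _ (hub n : (S n).Nonempty)).mono subset_closure)
      isClosed_closure.isCompact (fun _ => isClosed_closure)
  rw [mem_iInter] at hp
  refine ⟨p, fun hpυ => ?_, hp⟩
  let h : X → unitInterval := fun x =>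
    ⟨1 / (|g x| + 1), by positivity, (div_le_one (by positivity)).2 (by simp)⟩
  have hh : Continuous h := Continuous.subtype_mk (continuous_const.div
    (hg.abs.add continuous_const) fun x => (by positivity : 0 < |g x| + 1).ne') _
  let H : C(StoneCech X, ℝ) := ⟨fun q => ((stoneCechExtend hh q : unitInterval) : ℝ),
    continuous_subtype_val.comp (continuous_stoneCechExtend hh)⟩
  have hHX (x : X) : H (stoneCechUnit x) = 1 / (|g x| + 1) := by simp [H, h]
  have hHp : H p = 0 := by
    refine le_antisymm (ge_of_tendsto' tendsto_one_div_add_atTop_nhds_zero_nat fun n => ?_)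
      (stoneCechExtend hh p).2.1
    refine closure_minimal (image_subset_iff.2 fun x (hx : (n : ℝ) ≤ |g x|) => ?_)
      (isClosed_le H.continuous continuous_const) (hp n)
    change H _ ≤ _
    rw [hHX]
    gcongr
  obtain ⟨_, hzero, x, rfl⟩ := hpυ (H ⁻¹' {0}) ⟨H, rfl⟩ hHp
  have : 0 < H (stoneCechUnit x) := by rw [hHX]; positivity
  exact this.ne' hzero

lemma isPseudocompactSet_of_compl_upsilonSet_subset {W : Set (StoneCech X)}
    (hX : range stoneCechUnit ⊆ W) (hυ : (upsilonSet X)ᶜ ⊆ W) : IsPseudocompactSet W := by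
  intro f
  set e : X → W := codRestrict stoneCechUnit W fun x => hX (mem_range_self x)
  suffices ∃ M, ∀ x, |f (e x)| ≤ M from
    this.imp fun _ => abs_le_of_denseRange (denseRange_stoneCechUnit.codRestrict _) f
  by_contra! hub
  obtain ⟨p, hpυ, hp⟩ := exists_notMem_upsilonSet_of_unbounded
    (f.continuous.comp (continuous_stoneCechUnit.codRestrict _))
    fun n => (hub n).imp fun _ => le_of_lt
  have hbig (n : ℕ) : (n : ℝ) ≤ |f ⟨p, hυ hpυ⟩| := by
    refine closure_minimal (s := (↑) ⁻¹' (stoneCechUnit '' {x | (n : ℝ) ≤ |f (e x)|})) ?_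
      (isClosed_le continuous_const (continuous_abs.comp f.continuous)) ?_
    · rintro w ⟨x, hx, hxw⟩
      rwa [show w = e x from Subtype.ext hxw.symm]
    · rw [closure_subtype, image_preimage_eq_of_subset]
      · exact hp n
      · rintro _ ⟨x, -, rfl⟩
        exact ⟨e x, rfl⟩
  obtain ⟨n, hn⟩ := exists_nat_gt |f ⟨p, hυ hpυ⟩|
  exact (hbig n).not_gt hn

end StoneCech

lemma isPseudocompactSet_of_image_compl_upsilonSet_subset {X K : Type*} [TopologicalSpace X]
    [TopologicalSpace K] {φ : StoneCech X → K} (hφ : Continuous φ)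
    (hd : DenseRange (φ ∘ stoneCechUnit)) {Y : Set K} (hX : range (φ ∘ stoneCechUnit) ⊆ Y)
    (hυ : φ '' (upsilonSet X)ᶜ ⊆ Y) : IsPseudocompactSet Y := by
  intro f
  have hW : IsPseudocompactSet (φ ⁻¹' Y) :=
    isPseudocompactSet_of_compl_upsilonSet_subset
      (by rwa [← image_subset_iff, ← range_comp]) (image_subset_iff.1 hυ)
  obtain ⟨M, hM⟩ := hW (f.comp ⟨Y.restrictPreimage φ, hφ.restrictPreimage⟩)
  exact ⟨M, abs_le_of_denseRange (hd.codRestrict fun x => hX (mem_range_self x)) f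
    fun x => hM ⟨stoneCechUnit x, hX (mem_range_self x)⟩⟩

theorem union_compact_is_pseudocompactification_general (X K : Type*) [TopologicalSpace X]
    [TopologicalSpace K]
    (k : X → K) (hkd : DenseRange k)
    (φ : StoneCech X → K) (hφ : Continuous φ)
    (hφk : ∀ x : X, φ (stoneCechUnit x) = k x)
    (E : Set K) (hE : IsCompact E) (hEX : E ⊆ (Set.range k)ᶜ)
    (hEζ : φ '' (zetaSet X \ Set.range (stoneCechUnit : X → StoneCech X)) ⊆ E) :
    Set.range k ∪ E ⊆ closure (Set.range k) ∧
    IsPseudocompactSet (Set.range k ∪ E) ∧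
    IsCompact ((Set.range k ∪ E) \ Set.range k) := by
  obtain rfl : φ ∘ stoneCechUnit = k := funext hφk
  refine ⟨hkd.closure_range ▸ subset_univ _, ?_, ?_⟩
  · refine isPseudocompactSet_of_image_compl_upsilonSet_subset hφ hkd subset_union_left ?_
    exact ((image_mono compl_upsilonSet_subset_zetaSet_diff).trans hEζ).trans subset_union_right
  · rwa [union_sdiff_left, sdiff_eq_left.2 (subset_compl_iff_disjoint_right.1 hEX)]

/-- Let `X` be a locally pseudocompact Tychonoff space, `K` a compactification of `X` (via the
dense embedding `k`), `φ : βX → K` the continuous extension of the identity of `X`, and `E` a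
compact subset of `K \ X` containing `φ[ζX \ X]`. Then the subspace `Y = X ∪ E` of `K` is a
pseudocompactification of `X` with compact remainder. -/
theorem union_compact_is_pseudocompactification (X K : Type*) [TopologicalSpace X] [T2Space X]
    [CompletelyRegularSpace X] [TopologicalSpace K] [CompactSpace K] [T2Space K]
    (hlp : ∀ x : X, ∃ U : Set X, IsOpen U ∧ x ∈ U ∧ IsPseudocompactSet (closure U))
    (k : X → K) (hk : IsEmbedding k) (hkd : DenseRange k)
    (φ : StoneCech X → K) (hφ : Continuous φ)
    (hφk : ∀ x : X, φ (stoneCechUnit x) = k x)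
    (E : Set K) (hE : IsCompact E) (hEX : E ⊆ (Set.range k)ᶜ)
    (hEζ : φ '' (zetaSet X \ Set.range (stoneCechUnit : X → StoneCech X)) ⊆ E) :
    Set.range k ∪ E ⊆ closure (Set.range k) ∧
    IsPseudocompactSet (Set.range k ∪ E) ∧
    IsCompact ((Set.range k ∪ E) \ Set.range k) :=
  union_compact_is_pseudocompactification_general X K k hkd φ hφ hφk E hE hEX hEζ
end

section
/- Let X be a locally pseudocompact Tychonoff space. Every pseudocompactification Y of X with compact remainder is of the form Y = X ∪ E, where K is a compactification of Y (hence of X), φ : βX → K is the continuous extension of the identity map of X, and E is a compact subset of K \ X containing φ[ζX \ X]; in particular, for any compactification K of Y with extension map φ : βX → K, one has φ[ζX \ X] ⊆ Y \ X. -/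
open Set Topology

/-
A point `p ∈ βX \ υX` lies on a zero-set `Z(f)` of `βX` missing `X`. If `φ p` were outside `Y`,
Urysohn's lemma in `K` gives `h` vanishing at `φ p` and equal to `1` on the compact remainder
`Y \ X`; then `|f| + h ∘ φ` is positive on `X`, at least `1/2` near the remainder, yet vanishes
at `p`, so its minimum with `1/2`, extended by `1/2` over the remainder, is a positive function
on `Y` with infimum `0`, contradicting pseudocompactness of `Y`. If instead `φ p` were a point
`x ∈ X`, a neighbourhood of `x` with pseudocompact closure would put `p` in the `βX`-closure of a
pseudocompact subset of `X`, on which `1 / |f|` would be bounded: again impossible. Hence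
`φ` maps `βX \ υX`, and by continuity its closure, into the compact set `Y \ X`.
-/

open Function

section ExtendConst

variable {X Y β : Type*} [TopologicalSpace X] [TopologicalSpace Y] [TopologicalSpace β]

theorem Topology.IsOpenEmbedding.continuous_extend_const {e : X → Y} (he : IsOpenEmbedding e)
    {u : X → β} (hu : Continuous u) {c : β} {W : Set Y} (hW : IsOpen W)
    (hWrem : (range e)ᶜ ⊆ W) (huW : ∀ x, e x ∈ W → u x = c) :
    Continuous (extend e u fun _ => c) := by
  have hW_const : ∀ y ∈ W, extend e u (fun _ => c) y = c := by
    intro y hy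
    by_cases hye : ∃ x, e x = y
    · obtain ⟨x, rfl⟩ := hye
      rw [he.injective.extend_apply]
      exact huW x hy
    · exact extend_apply' _ _ _ hye
  refine continuous_iff_continuousAt.mpr fun y => ?_
  by_cases hy : y ∈ range e
  · obtain ⟨x, rfl⟩ := hy
    rw [← he.continuousAt_iff, extend_comp he.injective]
    exact hu.continuousAt
  · exact continuousAt_const.congr <|
      Filter.eventually_of_mem (hW.mem_nhds (hWrem hy)) fun y hy => (hW_const y hy).symm

end ExtendConst

section Pseudocompact

variable {X Y : Type*} [TopologicalSpace X] [TopologicalSpace Y]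

theorem IsPseudocompact.exists_pos_le (hY : IsPseudocompact Y) {F : Y → ℝ} (hF : Continuous F)
    (hpos : ∀ y, 0 < F y) : ∃ δ > 0, ∀ y, δ ≤ F y := by
  obtain ⟨M, hM⟩ := hY ⟨fun y => (F y)⁻¹, hF.inv₀ fun y => (hpos y).ne'⟩
  refine ⟨(|M| + 1)⁻¹, by positivity, fun y => ?_⟩
  have hFM : (F y)⁻¹ ≤ |M| + 1 :=
    (le_abs_self _).trans ((hM y).trans ((le_abs_self M).trans (lt_add_one _).le))
  exact (inv_le_comm₀ (hpos y) (by positivity)).mp hFM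

theorem IsPseudocompact.exists_pos_le_of_isOpenEmbedding (hY : IsPseudocompact Y) {e : X → Y}
    (he : IsOpenEmbedding e) {F : X → ℝ} (hF : Continuous F) (hpos : ∀ x, 0 < F x)
    {c : ℝ} (hc : 0 < c) {W : Set Y} (hW : IsOpen W) (hWrem : (range e)ᶜ ⊆ W)
    (hFW : ∀ x, e x ∈ W → c ≤ F x) : ∃ δ > 0, ∀ x, δ ≤ F x := by
  set Φ : Y → ℝ := extend e (fun x => min (F x) c) fun _ => c
  have hΦ : Continuous Φ :=
    he.continuous_extend_const (hF.min continuous_const) hW hWrem fun x hx => min_eq_right (hFW x hx)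
  have hΦe : ∀ x, Φ (e x) = min (F x) c := he.injective.extend_apply _ _
  have hΦpos : ∀ y, 0 < Φ y := by
    intro y
    by_cases hy : ∃ x, e x = y
    · obtain ⟨x, rfl⟩ := hy
      rw [hΦe]
      exact lt_min (hpos x) hc
    · rw [show Φ y = c from extend_apply' _ _ _ hy]
      exact hc
  obtain ⟨δ, hδ, hδΦ⟩ := hY.exists_pos_le hΦ hΦpos
  exact ⟨δ, hδ, fun x => (hδΦ (e x)).trans ((hΦe x).trans_le (min_le_left _ _))⟩

end Pseudocompact

section StoneCech

variable {X : Type*} [TopologicalSpace X]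

theorem exists_continuousMap_of_notMem_upsilonSet {p : StoneCech X} (hp : p ∉ upsilonSet X) :
    ∃ f : C(StoneCech X, ℝ), f p = 0 ∧ ∀ x, f (stoneCechUnit x) ≠ 0 := by
  simp only [upsilonSet, Set.mem_ofPred_eq, not_forall, Set.not_nonempty_iff_eq_empty] at hp
  obtain ⟨_, ⟨f, rfl⟩, hfp, hZX⟩ := hp
  exact ⟨f, hfp, fun x hfx => (Set.eq_empty_iff_forall_notMem.mp hZX) _ ⟨hfx, x, rfl⟩⟩

theorem closure_image_stoneCechUnit_subset_upsilonSet {U : Set X}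
    (hU : IsPseudocompactSet (closure U)) :
    closure (stoneCechUnit '' U) ⊆ upsilonSet X := by
  intro p hpU
  by_contra hp
  obtain ⟨f, hfp, hfX⟩ := exists_continuousMap_of_notMem_upsilonSet hp
  have hcont : Continuous fun a : closure U => |f (stoneCechUnit a.1)| :=
    (f.continuous.comp (continuous_stoneCechUnit.comp continuous_subtype_val)).abs
  obtain ⟨δ, hδ, hδf⟩ :=
    IsPseudocompact.exists_pos_le hU hcont fun a => abs_pos.mpr (hfX a.1)
  have hδp : δ ≤ |f p| := by
    refine le_on_closure (f := fun _ => δ) (g := fun r => |f r|) ?_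
      continuousOn_const f.continuous.abs.continuousOn hpU
    rintro _ ⟨x, hx, rfl⟩
    exact hδf ⟨x, subset_closure hx⟩
  rw [hfp, abs_zero] at hδp
  exact hδ.not_ge hδp

variable {K : Type*} [TopologicalSpace K]

theorem mem_upsilonSet_of_map_mem_range
    (hlp : ∀ x : X, ∃ U : Set X, IsOpen U ∧ x ∈ U ∧ IsPseudocompactSet (closure U))
    {g : X → K} (hg : IsInducing g) {φ : StoneCech X → K} (hφ : Continuous φ)
    (hφg : ∀ x, φ (stoneCechUnit x) = g x) {p : StoneCech X} (hp : φ p ∈ range g) :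
    p ∈ upsilonSet X := by
  obtain ⟨x, hx⟩ := hp
  obtain ⟨U, hUo, hxU, hUps⟩ := hlp x
  obtain ⟨V, hVo, rfl⟩ := hg.isOpen_iff.mp hUo
  have hpV : p ∈ φ ⁻¹' V := by rwa [Set.mem_preimage, ← hx]
  have hVX : φ ⁻¹' V ∩ range stoneCechUnit = stoneCechUnit '' (g ⁻¹' V) := by
    ext r
    constructor
    · rintro ⟨hr, x', rfl⟩
      exact ⟨x', by rwa [Set.mem_preimage, ← hφg], rfl⟩
    · rintro ⟨x', hx', rfl⟩
      exact ⟨by rwa [Set.mem_preimage, hφg], x', rfl⟩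
  refine closure_image_stoneCechUnit_subset_upsilonSet hUps ?_
  rw [← hVX]
  exact denseRange_stoneCechUnit.open_subset_closure_inter (hVo.preimage hφ) hpV

end StoneCech

section Compactification

variable {X Y K : Type*} [TopologicalSpace X] [TopologicalSpace Y] [T2Space Y]
  [TopologicalSpace K] [CompactSpace K] [T2Space K]
  {e : X → Y} {j : Y → K} {φ : StoneCech X → K}

theorem map_mem_range_of_notMem_upsilonSet (he : IsEmbedding e) (hY : IsPseudocompact Y)
    (hrem : IsCompact (range e)ᶜ) (hj : IsEmbedding j) (hφ : Continuous φ)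
    (hφe : ∀ x, φ (stoneCechUnit x) = j (e x)) {p : StoneCech X} (hp : p ∉ upsilonSet X) :
    φ p ∈ range j := by
  by_contra hq
  obtain ⟨f, hfp, hfX⟩ := exists_continuousMap_of_notMem_upsilonSet hp
  have hdisj : Disjoint {φ p} (j '' (range e)ᶜ) := by
    rw [Set.disjoint_singleton_left]
    rintro ⟨y, -, hy⟩
    exact hq ⟨y, hy⟩
  obtain ⟨h, hhp, hhrem, hh01⟩ := exists_continuous_zero_one_of_isClosed isClosed_singleton
    (hrem.image hj.continuous).isClosed hdisj
  set G : StoneCech X → ℝ := fun r => |f r| + h (φ r)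
  have hG : Continuous G := f.continuous.abs.add (h.continuous.comp hφ)
  have hGh : ∀ r, h (φ r) ≤ G r := fun r => le_add_of_nonneg_left (abs_nonneg _)
  have hGX : ∀ x, 0 < G (stoneCechUnit x) := fun x =>
    add_pos_of_pos_of_nonneg (abs_pos.mpr (hfX x)) (hh01 _).1
  have hGp : G p = 0 := by simp [G, hfp, hhp rfl]
  set W : Set Y := {y | 1 / 2 < h (j y)}
  have hWrem : (range e)ᶜ ⊆ W := fun y hy => by
    norm_num [W, hhrem ⟨y, hy, rfl⟩]
  have hGW : ∀ x, e x ∈ W → 1 / 2 ≤ G (stoneCechUnit x) := fun x hx =>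
    hx.le.trans ((hφe x).symm ▸ hGh _)
  have he' : IsOpenEmbedding e := ⟨he, isClosed_compl_iff.mp hrem.isClosed⟩
  obtain ⟨δ, hδ, hδG⟩ := hY.exists_pos_le_of_isOpenEmbedding he'
    (hG.comp continuous_stoneCechUnit) hGX one_half_pos
    (isOpen_lt continuous_const (h.continuous.comp hj.continuous)) hWrem hGW
  have hδp : δ ≤ G p :=
    le_on_closure (f := fun _ => δ) (g := G) (s := range stoneCechUnit)
      (forall_mem_range.mpr hδG) continuousOn_const hG.continuousOn
      (by rw [denseRange_stoneCechUnit.closure_range]; trivial)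
  exact hδ.not_ge (hGp ▸ hδp)

theorem image_compl_upsilonSet_subset
    (hlp : ∀ x : X, ∃ U : Set X, IsOpen U ∧ x ∈ U ∧ IsPseudocompactSet (closure U))
    (he : IsEmbedding e) (hY : IsPseudocompact Y) (hrem : IsCompact (range e)ᶜ)
    (hj : IsEmbedding j) (hφ : Continuous φ) (hφe : ∀ x, φ (stoneCechUnit x) = j (e x)) :
    φ '' (upsilonSet X)ᶜ ⊆ j '' (range e)ᶜ := by
  rintro _ ⟨p, hp, rfl⟩
  obtain ⟨y, hy⟩ := map_mem_range_of_notMem_upsilonSet he hY hrem hj hφ hφe hp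
  refine ⟨y, ?_, hy⟩
  rintro ⟨x, rfl⟩
  exact hp (mem_upsilonSet_of_map_mem_range hlp (hj.comp he).isInducing hφ hφe ⟨x, hy⟩)

theorem image_zetaSet_diff_subset
    (hlp : ∀ x : X, ∃ U : Set X, IsOpen U ∧ x ∈ U ∧ IsPseudocompactSet (closure U))
    (he : IsEmbedding e) (hY : IsPseudocompact Y) (hrem : IsCompact (range e)ᶜ)
    (hj : IsEmbedding j) (hφ : Continuous φ) (hφe : ∀ x, φ (stoneCechUnit x) = j (e x)) :
    φ '' (zetaSet X \ range stoneCechUnit) ⊆ j '' (range e)ᶜ := by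
  have hζ : zetaSet X \ range stoneCechUnit ⊆ closure (upsilonSet X)ᶜ :=
    fun p ⟨hpζ, hpX⟩ => hpζ.resolve_left hpX
  calc φ '' (zetaSet X \ range stoneCechUnit) ⊆ φ '' closure (upsilonSet X)ᶜ := image_mono hζ
    _ ⊆ closure (φ '' (upsilonSet X)ᶜ) := image_closure_subset_closure_image hφ
    _ ⊆ j '' (range e)ᶜ := closure_minimal
        (image_compl_upsilonSet_subset hlp he hY hrem hj hφ hφe) (hrem.image hj.continuous).isClosed

end Compactification

theorem pseudocompactification_form_general (X Y K : Type*) [TopologicalSpace X]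
    [TopologicalSpace Y] [T2Space Y]
    [TopologicalSpace K] [CompactSpace K] [T2Space K]
    (hlp : ∀ x : X, ∃ U : Set X, IsOpen U ∧ x ∈ U ∧ IsPseudocompactSet (closure U))
    (e : X → Y) (he : IsEmbedding e)
    (hps : IsPseudocompact Y) (hrem : IsCompact (Set.range e)ᶜ)
    (j : Y → K) (hj : IsEmbedding j)
    (φ : StoneCech X → K) (hφ : Continuous φ)
    (hφe : ∀ x : X, φ (stoneCechUnit x) = j (e x)) :
    (∃ E : Set K, IsCompact E ∧ E ⊆ (Set.range (j ∘ e))ᶜ ∧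
        φ '' (zetaSet X \ Set.range (stoneCechUnit : X → StoneCech X)) ⊆ E ∧
        Set.range j = Set.range (j ∘ e) ∪ E) ∧
    φ '' (zetaSet X \ Set.range (stoneCechUnit : X → StoneCech X)) ⊆
      Set.range j \ Set.range (j ∘ e) := by
  set E := j '' (range e)ᶜ
  have hζE := image_zetaSet_diff_subset hlp he hps hrem hj hφ hφe
  have hEX : E ⊆ (range (j ∘ e))ᶜ := by
    rintro _ ⟨y, hy, rfl⟩ ⟨x, hx⟩
    exact hy ⟨x, hj.injective hx⟩
  refine ⟨⟨E, hrem.image hj.continuous, hEX, hζE, ?_⟩,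
    fun k hk => ⟨image_subset_range _ _ (hζE hk), hEX (hζE hk)⟩⟩
  rw [range_comp, ← image_union, union_compl_self, image_univ]

/-- Let `X` be a locally pseudocompact Tychonoff space and `Y` a pseudocompactification of `X`
(via the dense embedding `e`) with compact remainder. Then for any compactification `K` of `Y`
(via the dense embedding `j`) with extension map `φ : βX → K` of the identity of `X`, `Y` is of
the form `X ∪ E` where `E` is a compact subset of `K \ X` containing `φ[ζX \ X]`; in
particular `φ[ζX \ X] ⊆ Y \ X`. -/
theorem pseudocompactification_form (X Y K : Type*) [TopologicalSpace X] [T2Space X]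
    [CompletelyRegularSpace X] [TopologicalSpace Y] [T2Space Y] [CompletelyRegularSpace Y]
    [TopologicalSpace K] [CompactSpace K] [T2Space K]
    (hlp : ∀ x : X, ∃ U : Set X, IsOpen U ∧ x ∈ U ∧ IsPseudocompactSet (closure U))
    (e : X → Y) (he : IsEmbedding e) (hd : DenseRange e)
    (hps : IsPseudocompact Y) (hrem : IsCompact (Set.range e)ᶜ)
    (j : Y → K) (hj : IsEmbedding j) (hjd : DenseRange j)
    (φ : StoneCech X → K) (hφ : Continuous φ)
    (hφe : ∀ x : X, φ (stoneCechUnit x) = j (e x)) :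
    (∃ E : Set K, IsCompact E ∧ E ⊆ (Set.range (j ∘ e))ᶜ ∧
        φ '' (zetaSet X \ Set.range (stoneCechUnit : X → StoneCech X)) ⊆ E ∧
        Set.range j = Set.range (j ∘ e) ∪ E) ∧
    φ '' (zetaSet X \ Set.range (stoneCechUnit : X → StoneCech X)) ⊆
      Set.range j \ Set.range (j ∘ e) :=
  pseudocompactification_form_general X Y K hlp e he hps hrem j hj φ hφ hφe
end

section
/- Let X be a locally pseudocompact Tychonoff space. Then ζX is the unique (up to equivalence of extensions) Tychonoff extension Y of X with compact remainder satisfying both: (1) a free z-ultrafilter in X is free in Y (i.e., the intersection of the closures in Y of its members is empty) if and only if it has an element contained in a cozero-set of X with pseudocompact closure in X; and (2) distinct z-ultrafilters in X have disjoint adherences in Y, where the adherence in Y of a z-ultrafilter is the intersection of the closures in Y of its members. -/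
/-!
Extend `e` to `φ : βX → βY`. Each `p ∈ βX` is the only point of the `βX`-adherence of the
z-ultrafilter `A^p = {Z : p ∈ cl_{βX} Z}`, and for `p ∉ X` we have `p ∈ cl_{βX}(βX \ υX)`
exactly when no member of `A^p` lies in a cozero-set with pseudocompact closure: the
`βX`-closure of a pseudocompact set lies in `υX`, and an open set whose `βX`-closure lies in `υX`
has pseudocompact closure in `X`. Through `φ`, condition (1) thus says `φ⁻¹(Y) = ζX`, and
condition (2) makes `φ` injective there; density of `X` in `Y` gives `Y ⊆ φ(βX)`, and `φ` is a
closed map, so it restricts to a homeomorphism `ζX ≃ Y`. Conversely, adherences in a copy of `ζX`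
are computed in `βX`, which yields (1) and (2).
-/

open Set Topology

/-- A z-filter on `Y`: a nonempty family of nonempty zero-sets, closed under finite
intersections and under zero-set supersets. -/
def IsZFilter {Y : Type*} [TopologicalSpace Y] (F : Set (Set Y)) : Prop :=
  F.Nonempty ∧ (∀ Z ∈ F, IsZeroSet Z ∧ Z.Nonempty) ∧
    (∀ Z ∈ F, ∀ W ∈ F, Z ∩ W ∈ F) ∧
    (∀ Z ∈ F, ∀ W : Set Y, IsZeroSet W → Z ⊆ W → W ∈ F)

/-- A z-ultrafilter: a maximal z-filter. -/
def IsZUltrafilter {Y : Type*} [TopologicalSpace Y] (F : Set (Set Y)) : Prop :=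
  IsZFilter F ∧ ∀ G : Set (Set Y), IsZFilter G → F ⊆ G → G = F

/-- A family of sets has the countable intersection property if every countable
subfamily has nonempty intersection. -/
def HasCIP {Y : Type*} (F : Set (Set Y)) : Prop :=
  ∀ G ⊆ F, G.Countable → (⋂₀ G).Nonempty

section ZeroSets

variable {X : Type*} [TopologicalSpace X]

lemma IsZeroSet.isClosed {Z : Set X} (hZ : IsZeroSet Z) : IsClosed Z := by
  obtain ⟨f, rfl⟩ := hZ
  exact isClosed_singleton.preimage f.continuous

lemma isZeroSet_univ : IsZeroSet (univ : Set X) :=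
  ⟨0, by ext; simp⟩

lemma isZeroSet_le {f : X → ℝ} (hf : Continuous f) (a : ℝ) : IsZeroSet {x | f x ≤ a} :=
  ⟨⟨fun x => max (f x - a) 0, by fun_prop⟩, by ext x; simp⟩

lemma isCozeroSet_lt {f : X → ℝ} (hf : Continuous f) (a : ℝ) : IsCozeroSet {x | f x < a} := by
  have hcompl : {x | f x < a}ᶜ = {x | -f x ≤ -a} := by
    ext x
    simp
  rw [IsCozeroSet, hcompl]
  exact isZeroSet_le hf.neg (-a)

lemma IsZeroSet.inter {Z W : Set X} (hZ : IsZeroSet Z) (hW : IsZeroSet W) :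
    IsZeroSet (Z ∩ W) := by
  obtain ⟨f, rfl⟩ := hZ
  obtain ⟨g, rfl⟩ := hW
  refine ⟨⟨fun x => |f x| + |g x|, by fun_prop⟩, ?_⟩
  ext x
  simp [add_eq_zero_iff_of_nonneg (abs_nonneg (f x)) (abs_nonneg (g x))]

end ZeroSets

namespace IsZUltrafilter

variable {X : Type*} [TopologicalSpace X] {F G : Set (Set X)} {Z W : Set X}

lemma isZeroSet (hF : IsZUltrafilter F) (hZ : Z ∈ F) : IsZeroSet Z := (hF.1.2.1 Z hZ).1

lemma nonempty (hF : IsZUltrafilter F) (hZ : Z ∈ F) : Z.Nonempty := (hF.1.2.1 Z hZ).2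

lemma inter_mem (hF : IsZUltrafilter F) (hZ : Z ∈ F) (hW : W ∈ F) : Z ∩ W ∈ F :=
  hF.1.2.2.1 Z hZ W hW

lemma mem_of_forall_inter_nonempty (hF : IsZUltrafilter F) (hW : IsZeroSet W)
    (h : ∀ Z ∈ F, (Z ∩ W).Nonempty) : W ∈ F := by
  obtain ⟨⟨⟨Z₀, hZ₀⟩, hmem, hinter, -⟩, hmax⟩ := hF
  let G : Set (Set X) := {V | IsZeroSet V ∧ ∃ Z ∈ F, Z ∩ W ⊆ V}
  have hWG : W ∈ G := ⟨hW, Z₀, hZ₀, inter_subset_right⟩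
  have hG : IsZFilter G := by
    refine ⟨⟨W, hWG⟩, ?_, ?_, ?_⟩
    · rintro V ⟨hV, Z, hZ, hsub⟩
      exact ⟨hV, (h Z hZ).mono hsub⟩
    · rintro V₁ ⟨hV₁, Z₁, hZ₁, h₁⟩ V₂ ⟨hV₂, Z₂, hZ₂, h₂⟩
      refine ⟨hV₁.inter hV₂, Z₁ ∩ Z₂, hinter _ hZ₁ _ hZ₂, ?_⟩
      rintro x ⟨⟨hx₁, hx₂⟩, hxW⟩
      exact ⟨h₁ ⟨hx₁, hxW⟩, h₂ ⟨hx₂, hxW⟩⟩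
    · rintro V ⟨-, Z, hZ, hsub⟩ V' hV' hVV'
      exact ⟨hV', Z, hZ, hsub.trans hVV'⟩
  rw [← hmax G hG fun Z hZ => ⟨(hmem Z hZ).1, Z, hZ, inter_subset_left⟩]
  exact hWG

lemma exists_disjoint_of_ne (hF : IsZUltrafilter F) (hG : IsZUltrafilter G) (hne : F ≠ G) :
    ∃ Z ∈ F, ∃ W ∈ G, Disjoint Z W := by
  by_contra! hmeet
  simp only [not_disjoint_iff_nonempty_inter] at hmeet
  refine hne (subset_antisymm (fun Z hZ => ?_) fun W hW => ?_)
  · exact hG.mem_of_forall_inter_nonempty (hF.isZeroSet hZ) fun W hW =>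
      inter_comm Z W ▸ hmeet Z hZ W hW
  · exact hF.mem_of_forall_inter_nonempty (hG.isZeroSet hW) fun Z hZ => hmeet Z hZ W hW

end IsZUltrafilter

section Adherence

variable {X Y K L : Type*} [TopologicalSpace Y] [TopologicalSpace K] [TopologicalSpace L]
  {F : Set (Set X)}

def adherence (c : X → K) (F : Set (Set X)) : Set K :=
  ⋂ Z ∈ F, closure (c '' Z)

lemma mem_adherence {c : X → K} {p : K} : p ∈ adherence c F ↔ ∀ Z ∈ F, p ∈ closure (c '' Z) :=
  mem_iInter₂

lemma mem_closure_image_inter_setOf_le {c : X → K} {Z : Set X} {p : K}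
    (hp : p ∈ closure (c '' Z)) {k : K → ℝ} (hk : Continuous k) {a : ℝ} (hpa : k p < a) :
    p ∈ closure (c '' (Z ∩ {x | k (c x) ≤ a})) := by
  refine closure_mono ?_ ((isOpen_lt hk continuous_const).inter_closure ⟨hpa, hp⟩)
  rintro _ ⟨hka, x, hx, rfl⟩
  exact ⟨x, ⟨hx, le_of_lt (show k (c x) < a from hka)⟩, rfl⟩

lemma adherence_eq_preimage {e : X → Y} {ψ : Y → K} (hψ : IsInducing ψ) :
    adherence e F = ψ ⁻¹' adherence (ψ ∘ e) F := by
  ext y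
  simp only [mem_preimage, mem_adherence]
  refine forall₂_congr fun Z _ => ?_
  rw [hψ.closure_eq_preimage_closure_image, image_comp, mem_preimage]

lemma mapsTo_adherence {c : X → K} {φ : K → L} (hφ : Continuous φ) :
    MapsTo φ (adherence c F) (adherence (φ ∘ c) F) := fun _ hp =>
  mem_adherence.2 fun Z hZ =>
    image_comp φ c Z ▸ mem_closure_image hφ.continuousAt (mem_adherence.1 hp Z hZ)

variable [TopologicalSpace X]

lemma IsZUltrafilter.setOf_le_mem {c : X → K} (hF : IsZUltrafilter F) (hc : Continuous c)
    {p : K} (hp : p ∈ adherence c F) {k : K → ℝ} (hk : Continuous k) {a : ℝ} (hpa : k p < a) :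
    {x | k (c x) ≤ a} ∈ F :=
  hF.mem_of_forall_inter_nonempty (isZeroSet_le (hk.comp hc) a) fun Z hZ =>
    (closure_nonempty_iff.1
      ⟨p, mem_closure_image_inter_setOf_le (mem_adherence.1 hp Z hZ) hk hpa⟩).of_image

lemma adherence_subsingleton [T35Space K] {c : X → K} (hc : Continuous c)
    (hF : IsZUltrafilter F) : (adherence c F).Subsingleton := by
  intro p hp q hq
  by_contra hpq
  obtain ⟨f, hf, hfp, hfq⟩ :=
    CompletelyRegularSpace.completely_regular p {q} isClosed_singleton hpq
  have hk : Continuous fun y => (f y : ℝ) := continuous_subtype_val.comp hf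
  have h₁ := hF.setOf_le_mem hc hp hk (a := 1 / 3) (by simp [hfp])
  have h₂ := hF.setOf_le_mem hc hq (k := fun y => 1 - (f y : ℝ)) (by fun_prop) (a := 1 / 3)
    (by norm_num [hfq (mem_singleton q)])
  obtain ⟨x, hx₁, hx₂⟩ := hF.nonempty (hF.inter_mem h₁ h₂)
  have hsum : (f (c x) : ℝ) + (1 - f (c x)) ≤ 1 / 3 + 1 / 3 := add_le_add hx₁ hx₂
  linarith

lemma adherence_nonempty [CompactSpace K] {c : X → K} (hF : IsZUltrafilter F) :
    (adherence c F).Nonempty := by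
  have : Nonempty F := hF.1.1.to_subtype
  rw [adherence, biInter_eq_iInter]
  refine IsCompact.nonempty_iInter_of_directed_nonempty_isCompact_isClosed _ ?_
    (fun Z => ((hF.nonempty Z.2).image c).closure) (fun _ => isClosed_closure.isCompact)
    fun _ => isClosed_closure
  rintro ⟨Z, hZ⟩ ⟨W, hW⟩
  exact ⟨⟨Z ∩ W, hF.inter_mem hZ hW⟩, closure_mono (image_mono inter_subset_left),
    closure_mono (image_mono inter_subset_right)⟩

end Adherence

section StoneCech

variable {X : Type*} [TopologicalSpace X] {F G : Set (Set X)}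

lemma disjoint_closure_image_stoneCechUnit_of_separated {A B : Set X} {h : X → unitInterval}
    (hh : Continuous h) (hA : EqOn h 0 A) (hB : EqOn h 1 B) :
    Disjoint (closure (stoneCechUnit '' A)) (closure (stoneCechUnit '' B)) := by
  have hsub : ∀ {S : Set X} {t : unitInterval}, EqOn h (fun _ => t) S →
      closure (stoneCechUnit '' S) ⊆ stoneCechExtend hh ⁻¹' {t} := fun hS =>
    closure_minimal (by rintro _ ⟨x, hx, rfl⟩; simp [stoneCechExtend_stoneCechUnit, hS hx])
      (isClosed_singleton.preimage (continuous_stoneCechExtend hh))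
  exact ((disjoint_singleton.2 zero_ne_one).preimage _).mono (hsub hA) (hsub hB)

lemma IsZeroSet.disjoint_closure_image_stoneCechUnit {Z W : Set X} (hZ : IsZeroSet Z)
    (hW : IsZeroSet W) (hZW : Disjoint Z W) :
    Disjoint (closure (stoneCechUnit '' Z)) (closure (stoneCechUnit '' W)) := by
  obtain ⟨f, rfl⟩ := hZ
  obtain ⟨g, rfl⟩ := hW
  have hpos : ∀ x, 0 < |f x| + |g x| := fun x => by
    by_cases hfx : f x = 0
    · have hgx : g x ≠ 0 := fun hgx => hZW.ne_of_mem (a := x) hfx hgx rfl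
      exact add_pos_of_nonneg_of_pos (abs_nonneg _) (abs_pos.2 hgx)
    · exact add_pos_of_pos_of_nonneg (abs_pos.2 hfx) (abs_nonneg _)
  let h : X → unitInterval := fun x => ⟨|f x| / (|f x| + |g x|),
    div_nonneg (abs_nonneg _) (hpos x).le, div_le_one_of_le₀ (by simp) (hpos x).le⟩
  have hh : Continuous h := Continuous.subtype_mk
    (f.continuous.abs.div (f.continuous.abs.add g.continuous.abs) fun x => (hpos x).ne') _
  refine disjoint_closure_image_stoneCechUnit_of_separated hh (fun x hx => ?_) fun x hx => ?_
  · ext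
    simp_all [h]
  · have hgx : g x = 0 := hx
    have hfx : f x ≠ 0 := by simpa [hgx] using hpos x
    ext
    simp_all [h]

def zUltrafilterAt (p : StoneCech X) : Set (Set X) :=
  {Z | IsZeroSet Z ∧ p ∈ closure (stoneCechUnit '' Z)}

lemma univ_mem_zUltrafilterAt (p : StoneCech X) : univ ∈ zUltrafilterAt p :=
  ⟨isZeroSet_univ, by rw [image_univ, denseRange_stoneCechUnit.closure_range]; trivial⟩

lemma exists_isZeroSet_disjoint_of_notMem_closure {p : StoneCech X} {W : Set X}
    (hp : p ∉ closure (stoneCechUnit '' W)) :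
    ∃ E, IsZeroSet E ∧ Disjoint E W ∧ ∀ Z ∈ zUltrafilterAt p, Z ∩ E ∈ zUltrafilterAt p := by
  obtain ⟨k, hkp, hkW, -⟩ := exists_continuous_zero_one_of_isClosed isClosed_singleton
    isClosed_closure (disjoint_singleton_left.2 hp)
  have hk : Continuous fun x => k (stoneCechUnit x) := k.continuous.comp continuous_stoneCechUnit
  refine ⟨{x | k (stoneCechUnit x) ≤ 1 / 2}, isZeroSet_le hk _, disjoint_left.2 fun x hxE hxW => ?_,
    fun Z hZ => ⟨hZ.1.inter (isZeroSet_le hk _),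
      mem_closure_image_inter_setOf_le hZ.2 k.continuous (by simp [hkp (mem_singleton p)])⟩⟩
  have hx1 : k (stoneCechUnit x) = 1 := hkW (subset_closure (mem_image_of_mem _ hxW))
  norm_num [hx1] at hxE

lemma inter_mem_zUltrafilterAt {p : StoneCech X} {Z W : Set X} (hZ : Z ∈ zUltrafilterAt p)
    (hW : W ∈ zUltrafilterAt p) : Z ∩ W ∈ zUltrafilterAt p := by
  refine ⟨hZ.1.inter hW.1, by_contra fun hp => ?_⟩
  obtain ⟨E, hE, hEZW, hEmem⟩ := exists_isZeroSet_disjoint_of_notMem_closure hp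
  have hdisj : Disjoint (Z ∩ E) (W ∩ E) := disjoint_left.2 fun x hxZ hxW =>
    disjoint_left.1 hEZW hxZ.2 ⟨hxZ.1, hxW.1⟩
  exact disjoint_left.1 ((hZ.1.inter hE).disjoint_closure_image_stoneCechUnit (hW.1.inter hE) hdisj)
    (hEmem Z hZ).2 (hEmem W hW).2

lemma isZUltrafilter_zUltrafilterAt (p : StoneCech X) : IsZUltrafilter (zUltrafilterAt p) := by
  have hfilter : IsZFilter (zUltrafilterAt p) := by
    refine ⟨⟨univ, univ_mem_zUltrafilterAt p⟩, fun Z hZ => ⟨hZ.1, ?_⟩,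
      fun Z hZ W hW => inter_mem_zUltrafilterAt hZ hW,
      fun Z hZ W hW hZW => ⟨hW, closure_mono (image_mono hZW) hZ.2⟩⟩
    exact (closure_nonempty_iff.1 ⟨p, hZ.2⟩).of_image
  refine ⟨hfilter, fun G hG hsub => subset_antisymm (fun W hW => ?_) hsub⟩
  refine ⟨(hG.2.1 W hW).1, by_contra fun hp => ?_⟩
  obtain ⟨E, -, hEW, hEmem⟩ := exists_isZeroSet_disjoint_of_notMem_closure hp
  have hE : E ∈ G := hsub (by simpa using hEmem univ (univ_mem_zUltrafilterAt p))
  obtain ⟨x, hxE, hxW⟩ := (hG.2.1 _ (hG.2.2.1 E hE W hW)).2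
  exact disjoint_left.1 hEW hxE hxW

lemma mem_adherence_zUltrafilterAt (p : StoneCech X) :
    p ∈ adherence stoneCechUnit (zUltrafilterAt p) :=
  mem_adherence.2 fun _ hZ => hZ.2

lemma zUltrafilterAt_injective : Function.Injective (zUltrafilterAt (X := X)) := fun p q hpq =>
  adherence_subsingleton continuous_stoneCechUnit (isZUltrafilter_zUltrafilterAt p)
    (mem_adherence_zUltrafilterAt p) (hpq ▸ mem_adherence_zUltrafilterAt q)

lemma disjoint_adherence_stoneCechUnit (hF : IsZUltrafilter F) (hG : IsZUltrafilter G)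
    (hne : F ≠ G) : Disjoint (adherence stoneCechUnit F) (adherence stoneCechUnit G) := by
  obtain ⟨Z, hZ, W, hW, hZW⟩ := hF.exists_disjoint_of_ne hG hne
  exact ((hF.isZeroSet hZ).disjoint_closure_image_stoneCechUnit (hG.isZeroSet hW) hZW).mono
    (iInter₂_subset Z hZ) (iInter₂_subset W hW)

lemma IsZUltrafilter.sInter_eq_empty_iff [CompletelyRegularSpace X] (hF : IsZUltrafilter F)
    {p : StoneCech X} (hp : p ∈ adherence stoneCechUnit F) :
    ⋂₀ F = ∅ ↔ p ∉ range stoneCechUnit := by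
  refine ⟨?_, fun hpr => eq_empty_iff_forall_notMem.2 fun x hx => hpr ⟨x, ?_⟩⟩
  · rintro hfree ⟨x, rfl⟩
    refine eq_empty_iff_forall_notMem.1 hfree x fun Z hZ => ?_
    rw [← (hF.isZeroSet hZ).isClosed.closure_eq,
      isInducing_stoneCechUnit.closure_eq_preimage_closure_image]
    exact mem_adherence.1 hp Z hZ
  · exact adherence_subsingleton continuous_stoneCechUnit hF
      (mem_adherence.2 fun Z hZ => subset_closure (mem_image_of_mem _ (hx Z hZ))) hp

end StoneCech

section Pseudocompact

variable {X : Type*} [TopologicalSpace X]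

lemma locallyFinite_of_lt_abs {A : Set X} (hA : IsClosed A) (h : C(A, ℝ)) {V : ℕ → Set X}
    (hVA : ∀ n, V n ⊆ A) (hV : ∀ n (a : A), (a : X) ∈ V n → (n : ℝ) < |h a|) :
    LocallyFinite V := by
  intro z
  by_cases hz : z ∈ A
  · obtain ⟨N, hN⟩ := exists_nat_gt |h ⟨z, hz⟩|
    obtain ⟨O, hO, hOpre⟩ := isOpen_induced_iff.1
      (isOpen_lt h.continuous.abs continuous_const : IsOpen {a : A | |h a| < N})
    have hmem : ∀ a : A, (a : X) ∈ O ↔ |h a| < N := fun a => Set.ext_iff.1 hOpre a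
    refine ⟨O, hO.mem_nhds ((hmem ⟨z, hz⟩).2 hN), (finite_Iio N).subset ?_⟩
    rintro n ⟨x, hxV, hxO⟩
    have hlt := (hV n ⟨x, hVA n hxV⟩ hxV).trans ((hmem ⟨x, hVA n hxV⟩).1 hxO)
    exact_mod_cast hlt
  · exact ⟨Aᶜ, hA.isOpen_compl.mem_nhds hz,
      finite_empty.subset fun n ⟨_, hxV, hxA⟩ => hxA (hVA n hxV)⟩

lemma exists_forall_le_of_locallyFinite [CompletelyRegularSpace X] {V : ℕ → Set X}
    (hVo : ∀ n, IsOpen (V n)) (hVne : ∀ n, (V n).Nonempty) (hV : LocallyFinite V) :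
    ∃ g : C(X, ℝ), ∀ n : ℕ, ∃ x ∈ V n, (n : ℝ) ≤ g x := by
  choose y hy using hVne
  choose φ hφc hφy hφV using fun n =>
    CompletelyRegularSpace.completely_regular (y n) (V n)ᶜ (hVo n).isClosed_compl
      (not_not.2 (hy n))
  let b : ℕ → X → ℝ := fun n x => n * (1 - φ n x)
  have hbc : ∀ n, Continuous (b n) := fun n =>
    continuous_const.mul (continuous_const.sub (continuous_subtype_val.comp (hφc n)))
  have hb0 : ∀ n x, 0 ≤ b n x := fun n x => mul_nonneg n.cast_nonneg (sub_nonneg.2 (φ n x).2.2)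
  have hsupp : ∀ n, Function.support (b n) ⊆ V n := fun n x hx =>
    by_contra fun hxV => hx (by simp [b, hφV n hxV])
  refine ⟨⟨fun x => ∑ᶠ n, b n x, continuous_finsum hbc (hV.subset hsupp)⟩,
    fun n => ⟨y n, hy n, ?_⟩⟩
  have hfin : (Function.support fun m => b m (y n)).Finite :=
    (hV.point_finite (y n)).subset fun m hm => hsupp m hm
  calc (n : ℝ) = b n (y n) := by simp [b, hφy]
    _ ≤ ∑ᶠ m, b m (y n) := single_le_finsum n hfin fun m => hb0 m (y n)

lemma isPseudocompactSet_closure_of_isOpen [CompletelyRegularSpace X] {C : Set X}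
    (hC : IsOpen C) (hb : ∀ f : C(X, ℝ), ∃ M, ∀ x ∈ closure C, |f x| ≤ M) :
    IsPseudocompactSet (closure C) := by
  intro h
  by_contra! hun
  -- the open sets `C ∩ {n < |h|}` form a locally finite sequence, which carries a continuous
  -- function on `X` that is unbounded on `C`
  choose O hOo hOpre using fun n : ℕ =>
    isOpen_induced_iff.1 (isOpen_lt continuous_const h.continuous.abs :
      IsOpen {a : closure C | (n : ℝ) < |h a|})
  have hmem : ∀ n (a : closure C), (a : X) ∈ O n ↔ (n : ℝ) < |h a| := fun n a =>
    Set.ext_iff.1 (hOpre n) a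
  have hVne : ∀ n, (C ∩ O n).Nonempty := fun n => by
    obtain ⟨a, ha⟩ := hun n
    obtain ⟨x, hxO, hxC⟩ := mem_closure_iff.1 a.2 (O n) (hOo n) ((hmem n a).2 ha)
    exact ⟨x, hxC, hxO⟩
  have hLF : LocallyFinite fun n => C ∩ O n :=
    locallyFinite_of_lt_abs isClosed_closure h (fun n => inter_subset_left.trans subset_closure)
      fun n a ha => (hmem n a).1 ha.2
  obtain ⟨g, hg⟩ := exists_forall_le_of_locallyFinite (fun n => hC.inter (hOo n)) hVne hLF
  obtain ⟨M, hM⟩ := hb g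
  obtain ⟨n, hn⟩ := exists_nat_gt M
  obtain ⟨x, hx, hgx⟩ := hg n
  linarith [le_abs_self (g x), hM x (subset_closure hx.1)]

lemma closure_image_subset_upsilonSet {P : Set X} (hP : IsPseudocompactSet P) :
    closure (stoneCechUnit '' P) ⊆ upsilonSet X := by
  rintro p hp _ ⟨G, rfl⟩ hpG
  by_contra hmiss
  have hG : ∀ x, G (stoneCechUnit x) ≠ 0 := fun x hx => hmiss ⟨_, hx, x, rfl⟩
  obtain ⟨M, hM⟩ := hP ⟨fun a => |G (stoneCechUnit a.1)|⁻¹,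
    (G.continuous.comp (continuous_stoneCechUnit.comp continuous_subtype_val)).abs.inv₀
      fun a => abs_ne_zero.2 (hG a.1)⟩
  have hMpos : 0 < max M 1 := lt_max_of_lt_right one_pos
  have hsub : closure (stoneCechUnit '' P) ⊆ {q | (max M 1)⁻¹ ≤ |G q|} := by
    refine closure_minimal ?_ (isClosed_le continuous_const G.continuous.abs)
    rintro _ ⟨x, hx, rfl⟩
    have hle : |G (stoneCechUnit x)|⁻¹ ≤ max M 1 :=
      (le_abs_self _).trans ((hM ⟨x, hx⟩).trans (le_max_left _ _))
    exact (inv_le_comm₀ (abs_pos.2 (hG x)) hMpos).1 hle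
  have hGp : G p = 0 := hpG
  have hle : (max M 1)⁻¹ ≤ |G p| := hsub hp
  rw [hGp, abs_zero] at hle
  exact (inv_pos.2 hMpos).not_ge hle

lemma exists_bound_of_closure_image_subset_upsilonSet {T : Set X}
    (hT : closure (stoneCechUnit '' T) ⊆ upsilonSet X) (f : C(X, ℝ)) :
    ∃ M, ∀ x ∈ T, |f x| ≤ M := by
  rcases T.eq_empty_or_nonempty with rfl | hTne
  · exact ⟨0, by simp⟩
  have hpos : ∀ x, 0 < 1 + |f x| := fun x => by positivity
  let g : X → unitInterval := fun x =>
    ⟨(1 + |f x|)⁻¹, (inv_pos.2 (hpos x)).le, inv_le_one_of_one_le₀ (by simp)⟩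
  have hg : Continuous g := Continuous.subtype_mk
    ((continuous_const.add f.continuous.abs).inv₀ fun x => (hpos x).ne') _
  let G : StoneCech X → ℝ := fun q => ((stoneCechExtend hg q : unitInterval) : ℝ)
  have hGc : Continuous G := continuous_subtype_val.comp (continuous_stoneCechExtend hg)
  have hGu : ∀ x, G (stoneCechUnit x) = (1 + |f x|)⁻¹ := fun x => by
    simp [G, g, stoneCechExtend_stoneCechUnit]
  obtain ⟨p, hpT, hpmin⟩ :=
    isClosed_closure.isCompact.exists_isMinOn (hTne.image _).closure hGc.continuousOn
  -- `p` lies in `υX`, so the zero-set of `G` cannot contain it: `G` does not vanish on `X`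
  have hGp : 0 < G p := by
    refine lt_of_le_of_ne (stoneCechExtend hg p).2.1 fun h0 => ?_
    obtain ⟨_, hq, x, rfl⟩ := hT hpT (G ⁻¹' {0}) ⟨⟨G, hGc⟩, rfl⟩ h0.symm
    exact (inv_pos.2 (hpos x)).ne' ((hGu x).symm.trans hq)
  refine ⟨(G p)⁻¹, fun x hx => ?_⟩
  have hle : G p ≤ (1 + |f x|)⁻¹ :=
    hGu x ▸ isMinOn_iff.1 hpmin _ (subset_closure (mem_image_of_mem _ hx))
  calc |f x| ≤ 1 + |f x| := le_add_of_nonneg_left zero_le_one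
    _ ≤ (G p)⁻¹ := (le_inv_comm₀ hGp (hpos x)).1 hle

end Pseudocompact

section Zeta

variable {X : Type*} [TopologicalSpace X] {F : Set (Set X)}

def HasPseudocompactCozeroMember (F : Set (Set X)) : Prop :=
  ∃ Z ∈ F, ∃ C : Set X, IsCozeroSet C ∧ IsPseudocompactSet (closure C) ∧ Z ⊆ C

lemma disjoint_closure_image_closure_compl_upsilonSet {Z C : Set X} (hZ : IsZeroSet Z)
    (hC : IsCozeroSet C) (hCpc : IsPseudocompactSet (closure C)) (hZC : Z ⊆ C) :
    Disjoint (closure (stoneCechUnit '' Z)) (closure (upsilonSet X)ᶜ) := by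
  let O := (closure (stoneCechUnit '' Cᶜ))ᶜ
  have hZO : closure (stoneCechUnit '' Z) ⊆ O :=
    (hZ.disjoint_closure_image_stoneCechUnit hC
      (disjoint_compl_right_iff_subset.2 hZC)).subset_compl_right
  have hcover : closure (stoneCechUnit '' Cᶜ) ∪ closure (stoneCechUnit '' C) = univ := by
    rw [← closure_union, ← image_union, compl_union_self, image_univ,
      denseRange_stoneCechUnit.closure_range]
  have hOυ : O ⊆ upsilonSet X :=
    calc O ⊆ closure (stoneCechUnit '' C) := compl_subset_iff_union.2 hcover
      _ ⊆ closure (stoneCechUnit '' closure C) := closure_mono (image_mono subset_closure)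
      _ ⊆ upsilonSet X := closure_image_subset_upsilonSet hCpc
  exact ((disjoint_compl_right.mono_left hOυ).closure_right
    isClosed_closure.isOpen_compl).mono_left hZO

lemma IsZUltrafilter.hasPseudocompactCozeroMember [CompletelyRegularSpace X]
    (hF : IsZUltrafilter F) {p : StoneCech X} (hp : p ∈ adherence stoneCechUnit F)
    (hpυ : p ∉ closure (upsilonSet X)ᶜ) : HasPseudocompactCozeroMember F := by
  obtain ⟨k, hkp, hkυ, -⟩ := exists_continuous_zero_one_of_isClosed isClosed_singleton
    isClosed_closure (disjoint_singleton_left.2 hpυ)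
  have hk : Continuous fun x => k (stoneCechUnit x) := k.continuous.comp continuous_stoneCechUnit
  let C := {x | k (stoneCechUnit x) < 1 / 2}
  have hCυ : closure (stoneCechUnit '' closure C) ⊆ upsilonSet X := by
    have hCle : closure C ⊆ {x | k (stoneCechUnit x) ≤ 1 / 2} :=
      closure_minimal (fun _ hx => le_of_lt (show _ < (1 / 2 : ℝ) from hx))
        (isClosed_le hk continuous_const)
    refine (closure_minimal (image_subset_iff.2 hCle)
      (isClosed_le k.continuous continuous_const)).trans fun q hq => by_contra fun hqυ => ?_
    have hq1 : k q = 1 := hkυ (subset_closure hqυ)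
    norm_num [hq1] at hq
  refine ⟨{x | k (stoneCechUnit x) ≤ 1 / 4},
    hF.setOf_le_mem continuous_stoneCechUnit hp k.continuous (by simp [hkp (mem_singleton p)]),
    C, isCozeroSet_lt hk _, isPseudocompactSet_closure_of_isOpen (isOpen_lt hk continuous_const)
      (exists_bound_of_closure_image_subset_upsilonSet hCυ), fun x hx => ?_⟩
  have hx' : k (stoneCechUnit x) ≤ 1 / 4 := hx
  exact lt_of_le_of_lt hx' (by norm_num)

lemma IsZUltrafilter.mem_zetaSet_iff [CompletelyRegularSpace X] (hF : IsZUltrafilter F)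
    {p : StoneCech X} (hp : p ∈ adherence stoneCechUnit F) (hfree : ⋂₀ F = ∅) :
    p ∈ zetaSet X ↔ ¬ HasPseudocompactCozeroMember F := by
  rw [zetaSet, mem_union, or_iff_right ((hF.sInter_eq_empty_iff hp).1 hfree)]
  refine ⟨fun hpυ ⟨Z, hZ, C, hC, hCpc, hZC⟩ => ?_, fun h => by_contra fun hpυ =>
    h (hF.hasPseudocompactCozeroMember hp hpυ)⟩
  exact disjoint_left.1 (disjoint_closure_image_closure_compl_upsilonSet (hF.isZeroSet hZ) hC
    hCpc hZC) (mem_adherence.1 hp Z hZ) hpυ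

end Zeta

lemma IsClosedMap.exists_homeomorph_preimage {K L : Type*} [TopologicalSpace K]
    [TopologicalSpace L] {φ : K → L} (hφ : Continuous φ) (hcl : IsClosedMap φ) {S : Set L}
    {T : Set K} (hT : φ ⁻¹' S = T) (hinj : InjOn φ T) (hsurj : S ⊆ range φ) :
    ∃ Φ : T ≃ₜ S, ∀ t, (Φ t : L) = φ t := by
  subst hT
  have hbij : Function.Bijective (S.restrictPreimage φ) :=
    ⟨fun a b hab => Subtype.ext (hinj a.2 b.2 (congrArg Subtype.val hab)), fun s =>
      let ⟨k, hk⟩ := hsurj s.2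
      ⟨⟨k, by simp [hk]⟩, Subtype.ext hk⟩⟩
  exact ⟨(Equiv.ofBijective _ hbij).toHomeomorphOfContinuousClosed hφ.restrictPreimage
    (hcl.restrictPreimage S), fun _ => rfl⟩

section Extension

variable {X Y : Type*} [TopologicalSpace X] [TopologicalSpace Y]

def AdherenceEmptyIff (e : X → Y) : Prop :=
  ∀ F : Set (Set X), IsZUltrafilter F → ⋂₀ F = ∅ →
    (adherence e F = ∅ ↔ HasPseudocompactCozeroMember F)

def PairwiseDisjointAdherences (e : X → Y) : Prop :=
  ∀ F G : Set (Set X), IsZUltrafilter F → IsZUltrafilter G → F ≠ G →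
    adherence e F ∩ adherence e G = ∅

lemma adherenceEmptyIff_of_isInducing [CompletelyRegularSpace X] {e : X → Y}
    {ψ : Y → StoneCech X} (hψ : IsInducing ψ) (hrange : range ψ = zetaSet X)
    (hψe : ψ ∘ e = stoneCechUnit) : AdherenceEmptyIff e := by
  intro F hF hfree
  obtain ⟨p, hp⟩ := adherence_nonempty (c := stoneCechUnit) hF
  rw [adherence_eq_preimage hψ, hψe,
    (adherence_subsingleton continuous_stoneCechUnit hF).eq_singleton_of_mem hp,
    preimage_singleton_eq_empty, hrange, hF.mem_zetaSet_iff hp hfree, not_not]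

lemma pairwiseDisjointAdherences_of_continuous {e : X → Y} {ψ : Y → StoneCech X}
    (hψ : Continuous ψ) (hψe : ψ ∘ e = stoneCechUnit) : PairwiseDisjointAdherences e := by
  intro F G hF hG hne
  rw [← disjoint_iff_inter_eq_empty]
  refine ((disjoint_adherence_stoneCechUnit hF hG hne).preimage ψ).mono ?_ ?_ <;>
    exact hψe ▸ mapsTo_adherence hψ

section StoneCechMap

variable {e : X → Y} (he : Continuous e)

noncomputable def stoneCechMap : StoneCech X → StoneCech Y :=
  stoneCechExtend (continuous_stoneCechUnit.comp he)

lemma continuous_stoneCechMap : Continuous (stoneCechMap he) :=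
  continuous_stoneCechExtend _

lemma stoneCechMap_comp_stoneCechUnit : stoneCechMap he ∘ stoneCechUnit = stoneCechUnit ∘ e :=
  stoneCechExtend_extends _

lemma range_stoneCechUnit_subset_range_stoneCechMap (hd : DenseRange e) :
    range (stoneCechUnit : Y → StoneCech Y) ⊆ range (stoneCechMap he) := by
  rintro _ ⟨y, rfl⟩
  refine closure_minimal ?_ (isCompact_range (continuous_stoneCechMap he)).isClosed
    (image_closure_subset_closure_image continuous_stoneCechUnit (mem_image_of_mem _ (hd y)))
  rintro _ ⟨_, ⟨x, rfl⟩, rfl⟩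
  exact ⟨stoneCechUnit x, congrFun (stoneCechMap_comp_stoneCechUnit he) x⟩

variable [CompletelyRegularSpace Y]

lemma mem_adherence_of_stoneCechMap_eq {F : Set (Set X)} {p : StoneCech X}
    (hp : p ∈ adherence stoneCechUnit F) {y : Y} (hy : stoneCechMap he p = stoneCechUnit y) :
    y ∈ adherence e F := by
  rw [adherence_eq_preimage isInducing_stoneCechUnit, mem_preimage, ← hy,
    ← stoneCechMap_comp_stoneCechUnit he]
  exact mapsTo_adherence (continuous_stoneCechMap he) hp

lemma injOn_stoneCechMap (h2 : PairwiseDisjointAdherences e) :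
    InjOn (stoneCechMap he) (stoneCechMap he ⁻¹' range stoneCechUnit) := by
  rintro p ⟨y, hyp⟩ q - hpq
  by_contra hne
  have hp := mem_adherence_of_stoneCechMap_eq he (mem_adherence_zUltrafilterAt p) hyp.symm
  have hq := mem_adherence_of_stoneCechMap_eq he (mem_adherence_zUltrafilterAt q)
    (hpq ▸ hyp.symm)
  exact eq_empty_iff_forall_notMem.1 (h2 _ _ (isZUltrafilter_zUltrafilterAt p)
    (isZUltrafilter_zUltrafilterAt q) (zUltrafilterAt_injective.ne hne)) y ⟨hp, hq⟩

variable [CompletelyRegularSpace X]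

lemma preimage_range_stoneCechMap (h1 : AdherenceEmptyIff e) :
    stoneCechMap he ⁻¹' range stoneCechUnit = zetaSet X := by
  ext p
  by_cases hpr : p ∈ range stoneCechUnit
  · obtain ⟨x, rfl⟩ := hpr
    exact iff_of_true ⟨e x, (congrFun (stoneCechMap_comp_stoneCechUnit he) x).symm⟩
      (Or.inl ⟨x, rfl⟩)
  have hF := isZUltrafilter_zUltrafilterAt p
  have hp := mem_adherence_zUltrafilterAt p
  have hfree := (hF.sInter_eq_empty_iff hp).2 hpr
  rw [mem_preimage, hF.mem_zetaSet_iff hp hfree, ← h1 _ hF hfree, ← ne_eq,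
    ← nonempty_iff_ne_empty]
  refine ⟨fun ⟨y, hy⟩ => ⟨y, mem_adherence_of_stoneCechMap_eq he hp hy.symm⟩,
    fun ⟨y, hy⟩ => ⟨y, adherence_subsingleton (continuous_stoneCechUnit.comp he) hF ?_ ?_⟩⟩
  · rwa [adherence_eq_preimage isInducing_stoneCechUnit] at hy
  · rw [← stoneCechMap_comp_stoneCechUnit he]
    exact mapsTo_adherence (continuous_stoneCechMap he) hp

end StoneCechMap

end Extension

theorem exists_homeomorph_zetaSet {X Y : Type*} [TopologicalSpace X] [TopologicalSpace Y]
    [CompletelyRegularSpace X] [T35Space Y] {e : X → Y} (he : Continuous e) (hd : DenseRange e)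
    (h1 : AdherenceEmptyIff e) (h2 : PairwiseDisjointAdherences e) :
    ∃ h : Y ≃ₜ zetaSet X, ∀ x : X, (h (e x) : StoneCech X) = stoneCechUnit x := by
  have hpre := preimage_range_stoneCechMap he h1
  obtain ⟨Φ, hΦ⟩ := (continuous_stoneCechMap he).isClosedMap.exists_homeomorph_preimage
    (continuous_stoneCechMap he) hpre (hpre ▸ injOn_stoneCechMap he h2)
    (range_stoneCechUnit_subset_range_stoneCechMap he hd)
  refine ⟨isEmbedding_stoneCechUnit.toHomeomorph.trans Φ.symm, fun x => ?_⟩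
  have hx : Φ ⟨stoneCechUnit x, Or.inl ⟨x, rfl⟩⟩ =
      isEmbedding_stoneCechUnit.toHomeomorph (e x) := Subtype.ext <| by
    rw [hΦ, IsEmbedding.toHomeomorph_apply_coe]
    exact congrFun (stoneCechMap_comp_stoneCechUnit he) x
  rw [Homeomorph.trans_apply, ← hx, Homeomorph.symm_apply_apply]

universe u

theorem zetaSet_unique_extension_zultrafilters_general (X : Type u) [TopologicalSpace X]
    [CompletelyRegularSpace X]
    (Y : Type u) [TopologicalSpace Y] [T2Space Y] [CompletelyRegularSpace Y]
    (e : X → Y) (he : IsEmbedding e) (hd : DenseRange e) :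
    ((∀ F : Set (Set X), IsZUltrafilter F → ⋂₀ F = ∅ →
        ((⋂ Z ∈ F, closure (e '' Z)) = ∅ ↔
          ∃ Z ∈ F, ∃ C : Set X, IsCozeroSet C ∧ IsPseudocompactSet (closure C) ∧ Z ⊆ C)) ∧
      (∀ F G : Set (Set X), IsZUltrafilter F → IsZUltrafilter G → F ≠ G →
        (⋂ Z ∈ F, closure (e '' Z)) ∩ (⋂ Z ∈ G, closure (e '' Z)) = ∅)) ↔
    ∃ h : Y ≃ₜ zetaSet X, ∀ x : X, (h (e x) : StoneCech X) = stoneCechUnit x := by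
  have : T35Space Y := {}
  refine ⟨fun ⟨h1, h2⟩ => exists_homeomorph_zetaSet he.continuous hd h1 h2, fun ⟨h, hh⟩ => ?_⟩
  have hψe : (Subtype.val ∘ h) ∘ e = stoneCechUnit := funext hh
  exact ⟨adherenceEmptyIff_of_isInducing (IsInducing.subtypeVal.comp h.isInducing)
      (by rw [range_comp, h.range_coe, image_univ, Subtype.range_coe]) hψe,
    pairwiseDisjointAdherences_of_continuous (continuous_subtype_val.comp h.continuous) hψe⟩

/-- Let `X` be a locally pseudocompact Tychonoff space. Then `ζX` is the unique (up to
equivalence of extensions) Tychonoff extension `Y` of `X` with compact remainder such that: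
(1) a free z-ultrafilter in `X` is free in `Y` iff it has an element contained in a cozero-set
of `X` with pseudocompact closure; and (2) distinct z-ultrafilters in `X` have disjoint
adherences in `Y`. Formally: a Tychonoff extension `Y` of `X` (via the dense embedding `e`)
with compact remainder satisfies (1) and (2) iff it is equivalent to `ζX`, i.e. there is a
homeomorphism of `Y` onto `ζX` fixing `X` pointwise. -/
theorem zetaSet_unique_extension_zultrafilters (X : Type u) [TopologicalSpace X] [T2Space X]
    [CompletelyRegularSpace X]
    (hlp : ∀ x : X, ∃ U : Set X, IsOpen U ∧ x ∈ U ∧ IsPseudocompactSet (closure U))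
    (Y : Type u) [TopologicalSpace Y] [T2Space Y] [CompletelyRegularSpace Y]
    (e : X → Y) (he : IsEmbedding e) (hd : DenseRange e)
    (hrem : IsCompact (Set.range e)ᶜ) :
    ((∀ F : Set (Set X), IsZUltrafilter F → ⋂₀ F = ∅ →
        ((⋂ Z ∈ F, closure (e '' Z)) = ∅ ↔
          ∃ Z ∈ F, ∃ C : Set X, IsCozeroSet C ∧ IsPseudocompactSet (closure C) ∧ Z ⊆ C)) ∧
      (∀ F G : Set (Set X), IsZUltrafilter F → IsZUltrafilter G → F ≠ G →
        (⋂ Z ∈ F, closure (e '' Z)) ∩ (⋂ Z ∈ G, closure (e '' Z)) = ∅)) ↔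
    ∃ h : Y ≃ₜ zetaSet X, ∀ x : X, (h (e x) : StoneCech X) = stoneCechUnit x :=
  zetaSet_unique_extension_zultrafilters_general X Y e he hd
end
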